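/- Let b > 0, γ > 0 and define F(s,t) = ¼(s⁴ + 2b s²t² + t⁴) and F_♯(s,t) = F(s,t) if s⁴+2bs²t²+t⁴ ≤ γ², and F_♯(s,t) = (γ/2)·√(s⁴+2bs²t²+t⁴) − γ²/4 otherwise. Then F_♯ is continuously differentiable on ℝ² and F_♯(s,t) ≤ F(s,t) for all (s,t) ∈ ℝ². -/

import Mathlib

/-!
`F♯ = φ ∘ Q` for the one-variable cut-off `φ(x) = x/4` on `x ≤ γ²`, `φ(x) = (γ/2)√x − γ²/4` beyond.
Both branches take the value `γ²/4` and have slope `1/4` at `x = γ²`, so `φ` is differentiable with the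
continuous derivative `γ / (4 max(γ, √x))`, and `F♯` is C¹ as a composition with a polynomial.
The inequality `F♯ ≤ F` is `(√Q − γ)² ≥ 0` on the region `Q > γ²`.
-/

/-- The quartic form `Q(s,t) = s⁴ + 2bs²t² + t⁴`. -/
def Qform (b : ℝ) (p : ℝ × ℝ) : ℝ :=
  p.1 ^ 4 + 2 * b * p.1 ^ 2 * p.2 ^ 2 + p.2 ^ 4

/-- `F(s,t) = ¼(s⁴ + 2bs²t² + t⁴)`. -/
noncomputable def Ffun (b : ℝ) (p : ℝ × ℝ) : ℝ := (1 / 4) * Qform b p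

/-- The penalized nonlinearity `F♯`. -/
noncomputable def Fsharp (b γ : ℝ) (p : ℝ × ℝ) : ℝ :=
  if Qform b p ≤ γ ^ 2 then (1 / 4) * Qform b p
  else (γ / 2) * Real.sqrt (Qform b p) - γ ^ 2 / 4

open Set

theorem hasDerivAt_ite_le {f g : ℝ → ℝ} {c d x : ℝ} (hfg : f c = g c)
    (hf : x ≤ c → HasDerivAt f d x) (hg : c ≤ x → HasDerivAt g d x) :
    HasDerivAt (fun y => if y ≤ c then f y else g y) d x := by
  rcases lt_trichotomy x c with hx | rfl | hx
  · refine (hf hx.le).congr_of_eventuallyEq ?_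
    filter_upwards [Iic_mem_nhds hx] with y hy
    exact if_pos hy
  · rw [← hasDerivWithinAt_univ, ← Iic_union_Ici]
    refine HasDerivWithinAt.union (s := Iic x) (t := Ici x)
      ((hf le_rfl).hasDerivWithinAt.congr (fun y hy => if_pos hy) (if_pos le_rfl)) ?_
    refine (hg le_rfl).hasDerivWithinAt.congr (fun y hy => ?_) (by simp [hfg])
    rcases (show x ≤ y from hy).eq_or_lt with rfl | hxy
    · simp [hfg]
    · exact if_neg (not_le.mpr hxy)
  · refine (hg hx.le).congr_of_eventuallyEq ?_
    filter_upwards [Ioi_mem_nhds hx] with y hy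
    exact if_neg (not_le.mpr hy)

noncomputable def sqrtCutoff (γ x : ℝ) : ℝ :=
  if x ≤ γ ^ 2 then (1 / 4) * x else (γ / 2) * Real.sqrt x - γ ^ 2 / 4

theorem hasDerivAt_sqrtCutoff {γ : ℝ} (hγ : 0 < γ) (x : ℝ) :
    HasDerivAt (sqrtCutoff γ) (γ / (4 * max γ (Real.sqrt x))) x := by
  refine hasDerivAt_ite_le (by rw [Real.sqrt_sq hγ.le]; ring) (fun hx => ?_) (fun hx => ?_)
  · have hmax : max γ (Real.sqrt x) = γ :=
      max_eq_left ((Real.sqrt_le_sqrt hx).trans_eq (Real.sqrt_sq hγ.le))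
    refine ((hasDerivAt_id' x).const_mul (1 / 4 : ℝ)).congr_deriv ?_
    rw [hmax]
    field_simp
  · have hγx : γ ≤ Real.sqrt x := Real.le_sqrt_of_sq_le hx
    have hx0 : x ≠ 0 := (lt_of_lt_of_le (by positivity) hx).ne'
    refine (((Real.hasDerivAt_sqrt hx0).const_mul (γ / 2)).sub_const (γ ^ 2 / 4)).congr_deriv ?_
    rw [max_eq_right hγx]
    field_simp
    ring

theorem contDiff_sqrtCutoff {γ : ℝ} (hγ : 0 < γ) : ContDiff ℝ 1 (sqrtCutoff γ) := by
  rw [contDiff_one_iff_deriv]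
  refine ⟨fun x => (hasDerivAt_sqrtCutoff hγ x).differentiableAt, ?_⟩
  rw [funext fun x => (hasDerivAt_sqrtCutoff hγ x).deriv]
  exact continuous_const.div (by fun_prop) fun x => by positivity

theorem sqrtCutoff_le (γ x : ℝ) : sqrtCutoff γ x ≤ (1 / 4) * x := by
  unfold sqrtCutoff
  split_ifs with hx
  · exact le_rfl
  · have hx0 : 0 ≤ x := (sq_nonneg γ).trans (not_le.mp hx).le
    nlinarith [sq_nonneg (Real.sqrt x - γ), Real.sq_sqrt hx0]

theorem stmt_1_general (b γ : ℝ) (hγ : 0 < γ) :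
    ContDiff ℝ 1 (Fsharp b γ) ∧ ∀ p : ℝ × ℝ, Fsharp b γ p ≤ Ffun b p :=
  ⟨(contDiff_sqrtCutoff hγ).comp (by unfold Qform; fun_prop), fun p => sqrtCutoff_le γ (Qform b p)⟩

/-- For `b, γ > 0`, the function `F♯` is continuously differentiable on `ℝ²`
and `F♯(s,t) ≤ F(s,t)` for all `(s,t) ∈ ℝ²`. -/
theorem stmt_1 (b γ : ℝ) (hb : 0 < b) (hγ : 0 < γ) :
    ContDiff ℝ 1 (Fsharp b γ) ∧ ∀ p : ℝ × ℝ, Fsharp b γ p ≤ Ffun b p :=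
  stmt_1_general b γ hγ
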